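/- arXiv:2108.03069 — 7 statements merged into one kernel-verified Lean document; each statement's English description precedes it below -/
import Mathlib

section
/- Suppose S=(s_i) and T=(t_i) are disjoint n-window sequences of periods ℓ and m respectively, and suppose S contains the n-tuple u at position i and T contains the n-tuple v at position j, where u is the conjugate of v. Then the cycle [s_0, s_1, ..., s_{i+n-1}, t_{j+n}, t_{j+n+1}, ..., t_{m-1}, t_0, ..., t_{j+n-1}, s_{i+n}, s_{i+n+1}, ..., s_{ℓ-1}] is a generating cycle for an n-window sequence of period ℓ+m. -/
/-- A sequence has `m` as a (not necessarily least) period. -/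
def hasPer (s : ℕ → Bool) (m : ℕ) : Prop := ∀ i, s (i + m) = s i

/-- `m` is the (least positive) period of `s`. -/
def isPeriod (s : ℕ → Bool) (m : ℕ) : Prop :=
  0 < m ∧ hasPer s m ∧ ∀ k, 0 < k → hasPer s k → m ≤ k

/-- The `n`-tuple appearing at position `i` of `s`. -/
def tup (s : ℕ → Bool) (n i : ℕ) : Fin n → Bool := fun k => s (i + (k : ℕ))

/-- The reverse of an `n`-tuple. -/
def tupRev {n : ℕ} (u : Fin n → Bool) : Fin n → Bool := fun k => u k.rev

/-- An `n`-window sequence of period `m`. -/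
def isNWindow (s : ℕ → Bool) (n m : ℕ) : Prop :=
  isPeriod s m ∧ ∀ i j, tup s n i = tup s n j → i ≡ j [MOD m]

/-- The weight of (one period of) `s`. -/
def wt (s : ℕ → Bool) (m : ℕ) : ℕ := ∑ i ∈ Finset.range m, (if s i then 1 else 0)

/-- The complement of a sequence. -/
def seqCompl (s : ℕ → Bool) : ℕ → Bool := fun i => !(s i)

/-- Two sequences are disjoint if they share no `n`-tuple. -/
def disjointSeq (s t : ℕ → Bool) (n : ℕ) : Prop := ∀ i j, tup s n i ≠ tup t n j

/-- A sequence is primitive if it is disjoint from its complement. -/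
def primitiveSeq (s : ℕ → Bool) (n : ℕ) : Prop := disjointSeq s (seqCompl s) n

/-- An orientable sequence of order `n` and period `m`. -/
def isOrientable (s : ℕ → Bool) (n m : ℕ) : Prop :=
  isNWindow s n m ∧ ∀ i j, tup s n i ≠ tupRev (tup s n j)

/-- Two sequences are o-disjoint: disjoint, and no `n`-tuple of one is the
reverse of an `n`-tuple of the other. -/
def oDisjoint (s t : ℕ → Bool) (n : ℕ) : Prop :=
  disjointSeq s t n ∧ ∀ i j, tup s n i ≠ tupRev (tup t n j)

/-- The Lempel homomorphism `D` on periodic sequences. -/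
def Dmap (t : ℕ → Bool) : ℕ → Bool := fun i => xor (t i) (t (i + 1))

/-- The set `D⁻¹(s)` of sequences mapping to `s` under `D`. -/
def Dinv (s : ℕ → Bool) : Set (ℕ → Bool) := { t | Dmap t = s }

/-- The conjugate of an `n`-tuple: flip its first bit. -/
def conjT {n : ℕ} (u : Fin n → Bool) : Fin n → Bool :=
  fun k => if (k : ℕ) = 0 then !(u k) else u k

/-- The periodic sequence generated by repeating the finite cycle `L`. -/
def genSeq (L : List Bool) : ℕ → Bool := fun i => L.getD (i % L.length) false

/-- Theorem 1 (cycle joining): if `S` and `T` are disjoint `n`-window sequences of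
periods `ℓ` and `m` containing conjugate `n`-tuples at positions `i` and `j`
respectively, then the cycle
`[s_0,…,s_{i+n-1}, t_{j+n},…,t_{m-1}, t_0,…,t_{j+n-1}, s_{i+n},…,s_{ℓ-1}]`
generates an `n`-window sequence of period `ℓ + m`. -/
theorem cycle_joining (n ℓ m i j : ℕ) (s t : ℕ → Bool)
    (hS : isNWindow s n ℓ) (hT : isNWindow t n m)
    (hdisj : disjointSeq s t n)
    (hi : i + n ≤ ℓ) (hj : j + n ≤ m)
    (hconj : tup s n i = conjT (tup t n j)) :
    isNWindow
      (genSeq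
        ((List.ofFn fun k : Fin (i + n) => s (k : ℕ)) ++
         (List.ofFn fun k : Fin (m - (j + n)) => t (j + n + (k : ℕ))) ++
         (List.ofFn fun k : Fin (j + n) => t (k : ℕ)) ++
         (List.ofFn fun k : Fin (ℓ - (i + n)) => s (i + n + (k : ℕ)))))
      n (ℓ + m) := by
  rcases Nat.eq_zero_or_pos n with hn0 | hn
  · subst hn0
    exact absurd (funext fun k => k.elim0) (hdisj 0 0)
  obtain ⟨⟨hℓpos, hsper, _⟩, hswin⟩ := hS
  obtain ⟨⟨hmpos, htper, _⟩, htwin⟩ := hT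
  set A := (List.ofFn fun k : Fin (i + n) => s (k : ℕ)) with hA
  set B := (List.ofFn fun k : Fin (m - (j + n)) => t (j + n + (k : ℕ))) with hB
  set C := (List.ofFn fun k : Fin (j + n) => t (k : ℕ)) with hC
  set D := (List.ofFn fun k : Fin (ℓ - (i + n)) => s (i + n + (k : ℕ))) with hD
  set L := A ++ B ++ C ++ D with hL
  set w := genSeq L with hwdef
  have hlen : L.length = ℓ + m := by
    simp only [hL, hA, hB, hC, hD, List.length_append, List.length_ofFn]
    omega
  have hw0 : ∀ x, w x = L.getD (x % (ℓ + m)) false := by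
    intro x
    rw [show w x = L.getD (x % L.length) false from rfl, hlen]
  have wmod : ∀ x, w x = w (x % (ℓ + m)) := by
    intro x
    rw [hw0, hw0, Nat.mod_mod_of_dvd _ dvd_rfl]
  have w_add : ∀ x, w (x + (ℓ + m)) = w x := by
    intro x
    rw [wmod (x + (ℓ + m)), wmod x, Nat.add_mod_right]
  -- pointwise conjugacy
  have hc : ∀ k, 1 ≤ k → k < n → s (i + k) = t (j + k) := by
    intro k h1 h2
    have hck := congrFun hconj ⟨k, h2⟩
    simp only [tup, conjT] at hck
    rwa [if_neg (by omega)] at hck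
  -- evaluation in the four regions
  have e1 : ∀ x, x < i + n → w x = s x := by
    intro x hx
    rw [hw0, Nat.mod_eq_of_lt (by omega), hL]
    rw [List.getD_append _ _ _ _ (by simp only [hA, hB, hC, List.length_append, List.length_ofFn]; omega)]
    rw [List.getD_append _ _ _ _ (by simp only [hA, hB, List.length_append, List.length_ofFn]; omega)]
    rw [List.getD_append _ _ _ _ (by simp only [hA, List.length_ofFn]; omega)]
    rw [hA, List.getD_eq_getElem _ _ (by simp only [List.length_ofFn]; omega), List.getElem_ofFn]
  have e2 : ∀ x, i + n ≤ x → x < i + n + m → w x = t (x - i + j) := by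
    intro x hx1 hx2
    rw [hw0, Nat.mod_eq_of_lt (by omega), hL]
    rw [List.getD_append _ _ _ _ (by simp only [hA, hB, hC, List.length_append, List.length_ofFn]; omega)]
    by_cases hxb : x < (i + n) + (m - (j + n))
    · rw [List.getD_append _ _ _ _ (by simp only [hA, hB, List.length_append, List.length_ofFn]; omega)]
      rw [List.getD_append_right _ _ _ _ (by simp only [hA, List.length_ofFn]; omega)]
      simp only [hA, List.length_ofFn]
      rw [hB, List.getD_eq_getElem _ _ (by simp only [List.length_ofFn]; omega), List.getElem_ofFn]
      show t (j + n + (x - (i + n))) = t (x - i + j)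
      congr 1
      omega
    · rw [List.getD_append_right _ _ _ _ (by simp only [hA, hB, List.length_append, List.length_ofFn]; omega)]
      simp only [hA, hB, List.length_append, List.length_ofFn]
      rw [hC, List.getD_eq_getElem _ _ (by simp only [List.length_ofFn]; omega), List.getElem_ofFn]
      show t (x - (i + n + (m - (j + n)))) = t (x - i + j)
      rw [show x - i + j = (x - (i + n + (m - (j + n)))) + m from by omega, htper]
  have e3 : ∀ x, i + n + m ≤ x → x < ℓ + m → w x = s (x - m) := by
    intro x hx1 hx2
    rw [hw0, Nat.mod_eq_of_lt (by omega), hL]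
    rw [List.getD_append_right _ _ _ _ (by simp only [hA, hB, hC, List.length_append, List.length_ofFn]; omega)]
    simp only [hA, hB, hC, List.length_append, List.length_ofFn]
    rw [hD, List.getD_eq_getElem _ _ (by simp only [List.length_ofFn]; omega), List.getElem_ofFn]
    show s (i + n + (x - (i + n + (m - (j + n)) + (j + n)))) = s (x - m)
    congr 1
    omega
  have e3' : ∀ x, i + n + m ≤ x → x < ℓ + m + i + n → w x = s (x - m) := by
    intro x hx1 hx2
    by_cases hx : x < ℓ + m
    · exact e3 x hx1 hx
    · have hrw : w x = w (x - (ℓ + m)) := by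
        conv_lhs => rw [show x = (x - (ℓ + m)) + (ℓ + m) from by omega]
        exact w_add _
      rw [hrw, e1 _ (by omega), show x - m = (x - (ℓ + m)) + ℓ from by omega]
      exact (hsper _).symm
  -- tuple identification
  have tup_mod : ∀ a, tup w n a = tup w n (a % (ℓ + m)) := by
    intro a
    funext k
    show w (a + (k : ℕ)) = w (a % (ℓ + m) + (k : ℕ))
    rw [wmod (a + (k : ℕ)), wmod (a % (ℓ + m) + (k : ℕ))]
    congr 1
    exact ((Nat.mod_modEq a (ℓ + m)).add_right (k : ℕ)).symm
  have tupS1 : ∀ a, a ≤ i → tup w n a = tup s n a := by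
    intro a ha
    funext k
    have hk := k.isLt
    exact e1 _ (by omega)
  have tupT : ∀ a, i < a → a ≤ i + m → tup w n a = tup t n (a - i + j) := by
    intro a h1 h2
    funext k
    have hk := k.isLt
    show w (a + (k : ℕ)) = t (a - i + j + (k : ℕ))
    by_cases hx : a + (k : ℕ) < i + n
    · rw [e1 _ hx, show a + (k : ℕ) = i + (a + (k : ℕ) - i) from by omega,
        hc (a + (k : ℕ) - i) (by omega) (by omega)]
      congr 1
      omega
    · rw [e2 _ (by omega) (by omega)]
      congr 1
      omega
  have tupS2 : ∀ a, i + m < a → a < ℓ + m → tup w n a = tup s n (a - m) := by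
    intro a h1 h2
    funext k
    have hk := k.isLt
    show w (a + (k : ℕ)) = s (a - m + (k : ℕ))
    by_cases hx : a + (k : ℕ) < i + n + m
    · rw [e2 _ (by omega) hx, show a - m + (k : ℕ) = i + (a + (k : ℕ) - m - i) from by omega,
        hc (a + (k : ℕ) - m - i) (by omega) (by omega),
        show a + (k : ℕ) - i + j = (j + (a + (k : ℕ) - m - i)) + m from by omega, htper]
    · rw [e3' _ (by omega) (by omega)]
      congr 1
      omega
  -- the window property
  have hwin : ∀ a b, tup w n a = tup w n b → a ≡ b [MOD ℓ + m] := by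
    intro a b hab
    have ha : a % (ℓ + m) < ℓ + m := Nat.mod_lt a (by omega)
    have hb : b % (ℓ + m) < ℓ + m := Nat.mod_lt b (by omega)
    rw [tup_mod a, tup_mod b] at hab
    suffices h : a % (ℓ + m) = b % (ℓ + m) from h
    have hclass : ∀ c, c < ℓ + m →
        (∃ p, p < ℓ ∧ tup w n c = tup s n p ∧ ((p ≤ i ∧ p = c) ∨ (i < p ∧ p + m = c))) ∨
        (∃ q, j < q ∧ q ≤ j + m ∧ tup w n c = tup t n q ∧ q + i = c + j) := by
      intro c hcP
      rcases show c ≤ i ∨ (i < c ∧ c ≤ i + m) ∨ i + m < c from by omega with h | h | h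
      · exact Or.inl ⟨c, by omega, tupS1 c h, Or.inl ⟨h, rfl⟩⟩
      · exact Or.inr ⟨c - i + j, by omega, by omega, tupT c h.1 h.2, by omega⟩
      · exact Or.inl ⟨c - m, by omega, tupS2 c h hcP, Or.inr ⟨by omega, by omega⟩⟩
    rcases hclass _ ha with ⟨p1, hp1, he1, hd1⟩ | ⟨q1, hq1a, hq1b, he1, hq1c⟩ <;>
      rcases hclass _ hb with ⟨p2, hp2, he2, hd2⟩ | ⟨q2, hq2a, hq2b, he2, hq2c⟩ <;>
      rw [he1, he2] at hab
    · have hmod := hswin p1 p2 hab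
      have hpe : p1 = p2 := by
        rwa [Nat.ModEq, Nat.mod_eq_of_lt hp1, Nat.mod_eq_of_lt hp2] at hmod
      omega
    · exact absurd hab (hdisj p1 q2)
    · exact absurd hab.symm (hdisj p2 q1)
    · have hmod := htwin q1 q2 hab
      have hqe : q1 = q2 := by
        rcases le_total q1 q2 with h | h
        · have hdv := (Nat.modEq_iff_dvd' h).mp hmod
          have := Nat.eq_zero_of_dvd_of_lt hdv (show q2 - q1 < m from by omega)
          omega
        · have hdv := (Nat.modEq_iff_dvd' h).mp hmod.symm
          have := Nat.eq_zero_of_dvd_of_lt hdv (show q1 - q2 < m from by omega)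
          omega
      omega
  refine ⟨⟨by omega, w_add, ?_⟩, hwin⟩
  intro k hk hper
  have h0 : tup w n 0 = tup w n k := by
    funext r
    show w (0 + (r : ℕ)) = w (k + (r : ℕ))
    rw [Nat.zero_add, Nat.add_comm k (r : ℕ)]
    exact (hper (r : ℕ)).symm
  have hmod := hwin 0 k h0
  exact Nat.le_of_dvd hk ((Nat.modEq_zero_iff_dvd).mp hmod.symm)
end

section
/- Suppose S=(s_i) is an n-window sequence of period m with w(S) even. Then D^{-1}(S) consists of exactly two sequences, which form a disjoint pair of complementary primitive (n+1)-window sequences, each of period m. -/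
def psum (s : ℕ → Bool) : ℕ → Bool
  | 0 => false
  | i+1 => xor (psum s i) (s i)

lemma Dmap_psum (s : ℕ → Bool) : Dmap (psum s) = s := by
  funext i; simp [Dmap, psum]

lemma Dmap_compl (t : ℕ → Bool) : Dmap (seqCompl t) = Dmap t := by
  funext i; simp [Dmap, seqCompl]

lemma psum_parity (s : ℕ → Bool) (k : ℕ) : psum s k = decide (Odd (wt s k)) := by
  induction k with
  | zero => simp [psum, wt]
  | succ k ih =>
    rw [psum, ih]
    unfold wt
    rw [Finset.sum_range_succ]
    have hgoal : ∀ w : ℕ, decide (Odd (w + 1)) = !decide (Odd w) := by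
      intro w
      rcases Nat.even_or_odd w with he | ho
      · simp [Nat.odd_add_one.mpr (Nat.not_odd_iff_even.mpr he), Nat.not_odd_iff_even.mpr he]
      · simp [Nat.odd_add_one, ho]
    cases hs : s k
    · simp [hs]
    · simp only [hs, if_true, Bool.xor_true]
      rw [hgoal]

lemma psum_shift (s : ℕ → Bool) (m : ℕ) (hp : hasPer s m) (i : ℕ) :
    psum s (i + m) = xor (psum s m) (psum s i) := by
  induction i with
  | zero => simp [psum]
  | succ i ih =>
    have e : i + 1 + m = (i + m) + 1 := by omega
    rw [e, psum, ih, psum, hp i]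
    cases psum s m <;> cases psum s i <;> cases s i <;> simp

lemma hasPer_mul (t : ℕ → Bool) (m : ℕ) (h : hasPer t m) (i c : ℕ) :
    t (i + c * m) = t i := by
  induction c with
  | zero => simp
  | succ c ih =>
    have e : i + (c+1)*m = (i + c*m) + m := by ring
    rw [e, h, ih]

lemma hasPer_modeq (t : ℕ → Bool) (m : ℕ) (h : hasPer t m) {i j : ℕ}
    (hij : i ≡ j [MOD m]) : t i = t j := by
  have h1 : t i = t (i % m) := by
    conv_lhs => rw [← Nat.mod_add_div' i m]
    exact hasPer_mul t m h _ _
  have h2 : t j = t (j % m) := by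
    conv_lhs => rw [← Nat.mod_add_div' j m]
    exact hasPer_mul t m h _ _
  rw [h1, h2, hij]

lemma Dinv_mem (s u : ℕ → Bool) (hu : Dmap u = s) (i : ℕ) :
    u i = xor (u 0) (psum s i) := by
  induction i with
  | zero => simp [psum]
  | succ i ih =>
    have hs : xor (u i) (u (i+1)) = s i := congrFun hu i
    have e : u (i+1) = xor (u i) (s i) := by
      cases h1 : u i <;> cases h2 : u (i+1) <;> simp_all
    rw [e, ih, psum]
    cases u 0 <;> cases psum s i <;> cases s i <;> simp

lemma core (s : ℕ → Bool) (n m : ℕ) (h : isNWindow s n m)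
    (u v : ℕ → Bool) (hu : Dmap u = s) (hv : Dmap v = s)
    (i j : ℕ) (heq : ∀ k, k ≤ n → u (i + k) = v (j + k)) :
    i ≡ j [MOD m] := by
  apply h.2
  funext k
  show s (i + (k : ℕ)) = s (j + (k : ℕ))
  have h1 := congrFun hu (i + (k : ℕ))
  have h2 := congrFun hv (j + (k : ℕ))
  have e1 := heq k (le_of_lt k.2)
  have e2 := heq ((k : ℕ) + 1) (by omega)
  have e2' : u (i + (k : ℕ) + 1) = v (j + (k : ℕ) + 1) := by
    have e := heq ((k : ℕ) + 1) (by omega)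
    rwa [show i + ((k : ℕ) + 1) = i + (k : ℕ) + 1 by ring,
      show j + ((k : ℕ) + 1) = j + (k : ℕ) + 1 by ring] at e
  rw [← h1, ← h2]
  simp only [Dmap]
  rw [e1, e2']

/-- Theorem 3, even case: if `S` is an `n`-window sequence of period `m` with
even weight, then `D⁻¹(S)` consists of exactly two sequences, a disjoint pair of
complementary primitive `(n+1)`-window sequences of period `m`. -/
theorem window_homo_even (n m : ℕ) (s : ℕ → Bool)
    (h : isNWindow s n m) (hw : Even (wt s m)) :
    ∃ t t' : ℕ → Bool, t ≠ t' ∧ Dinv s = {t, t'} ∧ t' = seqCompl t ∧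
      disjointSeq t t' (n + 1) ∧ primitiveSeq t (n + 1) ∧ primitiveSeq t' (n + 1) ∧
      isNWindow t (n + 1) m ∧ isNWindow t' (n + 1) m := by
  obtain ⟨⟨hm, hps, hmin⟩, hwin⟩ := h
  have hDt : Dmap (psum s) = s := Dmap_psum s
  have hDt' : Dmap (seqCompl (psum s)) = s := by rw [Dmap_compl, hDt]
  have hpm : psum s m = false := by
    rw [psum_parity]
    simp [Nat.not_odd_iff_even.mpr hw]
  have hpt : hasPer (psum s) m := by
    intro i
    rw [psum_shift s m hps i, hpm]
    simp
  have hpt' : hasPer (seqCompl (psum s)) m := fun i => by simp [seqCompl, hpt i]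
  have hperiod : ∀ u : ℕ → Bool, Dmap u = s → hasPer u m → isPeriod u m := by
    intro u hDu hpu
    refine ⟨hm, hpu, fun k hk hku => hmin k hk ?_⟩
    intro i
    have h1 : s (i + k) = xor (u (i+k)) (u (i+k+1)) := (congrFun hDu (i+k)).symm
    have h2 : s i = xor (u i) (u (i+1)) := (congrFun hDu i).symm
    rw [h1, h2, hku i, show i + k + 1 = (i+1) + k by ring, hku (i+1)]
  have hwind : ∀ u v : ℕ → Bool, Dmap u = s → Dmap v = s →
      ∀ i j, tup u (n+1) i = tup v (n+1) j → i ≡ j [MOD m] := by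
    intro u v hu hv i j htup
    refine core s n m ⟨⟨hm, hps, hmin⟩, hwin⟩ u v hu hv i j ?_
    intro k hk
    exact congrFun htup ⟨k, by omega⟩
  have hprim : ∀ u : ℕ → Bool, Dmap u = s → hasPer u m →
      disjointSeq u (seqCompl u) (n+1) := by
    intro u hu hup i j htup
    have hij := hwind u (seqCompl u) hu (by rw [Dmap_compl, hu]) i j htup
    have e0 : u (i + (0:ℕ)) = seqCompl u (j + (0:ℕ)) := congrFun htup ⟨0, by omega⟩
    have e1 : u i = u j := hasPer_modeq u m hup hij
    simp only [Nat.add_zero, seqCompl] at e0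
    rw [e1] at e0
    cases u j <;> simp_all
  have hset : Dinv s = ({psum s, seqCompl (psum s)} : Set (ℕ → Bool)) := by
    ext u
    simp only [Dinv, Set.mem_setOf_eq, Set.mem_insert_iff, Set.mem_singleton_iff]
    constructor
    · intro hu
      have key := Dinv_mem s u hu
      cases h0 : u 0
      · left; funext i; rw [key i, h0]; simp
      · right; funext i; rw [key i, h0]; simp [seqCompl]
    · rintro (rfl | rfl)
      · exact hDt
      · exact hDt'
  refine ⟨psum s, seqCompl (psum s), ?_, hset, rfl, hprim _ hDt hpt,
    hprim _ hDt hpt, ?_, ⟨hperiod _ hDt hpt, hwind _ _ hDt hDt⟩,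
    ⟨hperiod _ hDt' hpt', hwind _ _ hDt' hDt'⟩⟩
  · intro heq
    have := congrFun heq 0
    simp [seqCompl] at this
  · exact hprim _ hDt' hpt'
end

section
/- Suppose S=(s_i) is an n-window sequence of period m with w(S) odd. Then D^{-1}(S) consists of exactly two sequences, which are two different shifts of a single (n+1)-window sequence T of period 2m and weight m; specifically, D^{-1}(S) = {T, T'} where T'_i = T_{i+m} for all i. -/
def tseq (s : ℕ → Bool) : ℕ → Bool
  | 0 => false
  | (i+1) => xor (tseq s i) (s i)

lemma decide_succ_parity (a : ℕ) : decide ((a+1) % 2 = 1) = !decide (a % 2 = 1) := by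
  rcases Nat.mod_two_eq_zero_or_one a with h | h <;> simp [Nat.add_mod, h]

lemma Dmap_tseq (s : ℕ → Bool) : Dmap (tseq s) = s := by
  funext i
  show xor (tseq s i) (xor (tseq s i) (s i)) = s i
  cases tseq s i <;> cases s i <;> rfl

lemma tseq_parity (s : ℕ → Bool) : ∀ k, tseq s k = decide (wt s k % 2 = 1) := by
  intro k
  induction k with
  | zero => simp [tseq, wt]
  | succ k ih =>
    show xor (tseq s k) (s k) = _
    rw [ih]
    unfold wt
    rw [Finset.sum_range_succ]
    generalize (∑ i ∈ Finset.range k, if s i = true then 1 else 0) = a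
    cases h : s k
    · simp
    · simp only [if_true, Bool.xor_true]
      rw [decide_succ_parity]

lemma tseq_shift {s : ℕ → Bool} {m : ℕ} (hm : hasPer s m) (i : ℕ) :
    xor (tseq s i) (tseq s (i + m)) = tseq s m := by
  induction i with
  | zero => simp [tseq]
  | succ i ih =>
    have h2 : i + 1 + m = (i + m) + 1 := by omega
    rw [h2]
    show xor (xor (tseq s i) (s i)) (xor (tseq s (i+m)) (s (i+m))) = tseq s m
    rw [hm i, ← ih]
    cases tseq s i <;> cases tseq s (i+m) <;> cases s i <;> rfl


/-- Theorem 3, odd case: if `S` is an `n`-window sequence of period `m` with odd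
weight, then `D⁻¹(S)` consists of exactly two different shifts (by `m`) of a
single `(n+1)`-window sequence of period `2m` and weight `m`. -/
theorem window_homo_odd (n m : ℕ) (s : ℕ → Bool)
    (h : isNWindow s n m) (hw : Odd (wt s m)) :
    ∃ t : ℕ → Bool, isNWindow t (n + 1) (2 * m) ∧ wt t (2 * m) = m ∧
      t ≠ (fun i => t (i + m)) ∧ Dinv s = {t, fun i => t (i + m)} := by
  obtain ⟨⟨hm0, hper, _⟩, hwin⟩ := h
  have hDt : Dmap (tseq s) = s := Dmap_tseq s
  have htm : tseq s m = true := by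
    rw [tseq_parity]
    simp [Nat.odd_iff.mp hw]
  have hflip : ∀ i, tseq s (i + m) = ! tseq s i := by
    intro i
    have h1 := tseq_shift hper i
    rw [htm] at h1
    cases h2 : tseq s i <;> cases h3 : tseq s (i+m) <;> simp_all
  have hmul : ∀ k i, tseq s (i + k * m) = xor (tseq s i) (decide (k % 2 = 1)) := by
    intro k
    induction k with
    | zero => simp
    | succ k ih =>
      intro i
      have h2 : i + (k+1) * m = (i + k * m) + m := by ring
      rw [h2, hflip, ih, decide_succ_parity]
      cases tseq s i <;> cases decide (k % 2 = 1) <;> rfl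
  have hper2 : hasPer (tseq s) (2 * m) := by
    intro i
    have h2 : i + 2 * m = (i + m) + m := by ring
    rw [h2, hflip, hflip, Bool.not_not]
  have key : ∀ i j, i ≤ j → i ≡ j [MOD m] → tseq s i = tseq s j →
      i ≡ j [MOD 2*m] := by
    intro i j hle hmod heq
    obtain ⟨c, hc⟩ := (Nat.modEq_iff_dvd' hle).mp hmod
    have hj : j = i + m * c := by omega
    rw [hj, Nat.mul_comm m c, hmul] at heq
    have hc2 : c % 2 = 0 := by
      cases h2 : tseq s i <;> rw [h2] at heq <;> simp at heq <;> omega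
    apply (Nat.modEq_iff_dvd' hle).mpr
    obtain ⟨d, hd⟩ : ∃ d, c = 2 * d := ⟨c / 2, by omega⟩
    refine ⟨d, ?_⟩
    rw [hc, hd]
    ring
  have hwin2 : ∀ i j, tup (tseq s) (n+1) i = tup (tseq s) (n+1) j →
      i ≡ j [MOD 2*m] := by
    intro i j hij
    have hval : ∀ k, k ≤ n → tseq s (i + k) = tseq s (j + k) := by
      intro k hk
      exact congrFun hij ⟨k, by omega⟩
    have hs : tup s n i = tup s n j := by
      funext k
      have h1 := hval k (by omega)
      have h2 := hval ((k:ℕ)+1) (by omega)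
      show s (i + (k:ℕ)) = s (j + (k:ℕ))
      rw [← hDt]
      show xor (tseq s (i + (k:ℕ))) (tseq s (i + (k:ℕ) + 1))
         = xor (tseq s (j + (k:ℕ))) (tseq s (j + (k:ℕ) + 1))
      rw [show i + (k:ℕ) + 1 = i + ((k:ℕ)+1) by ring,
          show j + (k:ℕ) + 1 = j + ((k:ℕ)+1) by ring, h1, h2]
    have hmod := hwin i j hs
    have h0 : tseq s i = tseq s j := hval 0 (by omega)
    rcases le_total i j with hle | hle
    · exact key i j hle hmod h0
    · exact (key j i hle hmod.symm h0.symm).symm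
  refine ⟨tseq s, ⟨⟨by omega, hper2, ?_⟩, hwin2⟩, ?_, ?_, ?_⟩
  · -- least period
    intro k hk hpk
    have htt : tup (tseq s) (n+1) k = tup (tseq s) (n+1) 0 := by
      funext a
      show tseq s (k + (a:ℕ)) = tseq s (0 + (a:ℕ))
      rw [Nat.zero_add, Nat.add_comm]
      exact hpk a
    have := hwin2 k 0 htt
    exact Nat.le_of_dvd hk ((Nat.modEq_zero_iff_dvd).mp this)
  · -- weight
    unfold wt
    have h1 : ∀ i ∈ Finset.range m,
        ((if tseq s i then 1 else 0) + if tseq s (m+i) then 1 else 0) = 1 := by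
      intro i _
      rw [Nat.add_comm m i, hflip]
      cases tseq s i <;> rfl
    rw [two_mul, Finset.sum_range_add, ← Finset.sum_add_distrib,
        Finset.sum_congr rfl h1]
    simp
  · -- t ≠ shift
    intro heq
    have h0 := congrFun heq 0
    rw [Nat.zero_add, htm] at h0
    exact absurd h0 (by simp [tseq])
  · -- Dinv
    ext u
    simp only [Dinv, Set.mem_setOf_eq, Set.mem_insert_iff, Set.mem_singleton_iff]
    constructor
    · intro hu
      have hstep : ∀ i, u (i+1) = xor (u i) (s i) := by
        intro i
        have := congrFun hu i
        simp only [Dmap] at this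
        cases h1 : u i <;> cases h2 : u (i+1) <;> simp_all
      have hrep : ∀ i, u i = xor (u 0) (tseq s i) := by
        intro i
        induction i with
        | zero => simp [tseq]
        | succ i ih =>
          rw [hstep, ih]
          show _ = xor (u 0) (xor (tseq s i) (s i))
          cases u 0 <;> cases tseq s i <;> cases s i <;> rfl
      cases h0 : u 0
      · left
        funext i
        rw [hrep i, h0]
        simp
      · right
        funext i
        rw [hrep i, h0, hflip]
        cases tseq s i <;> rfl
    · rintro (rfl | rfl)
      · exact hDt
      · funext i
        show xor (tseq s (i + m)) (tseq s (i + 1 + m)) = s i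
        rw [show i + 1 + m = (i + m) + 1 by omega] at *
        rw [hflip, show (i+m) + 1 = (i+1) + m by omega, hflip, ← congrFun hDt i]
        show _ = xor (tseq s i) (tseq s (i+1))
        cases tseq s i <;> cases tseq s (i+1) <;> rfl
end

section
/- Suppose S=(s_i) is a de Bruijn sequence of order n > 1, and let D^{-1}(S) = {T, T'}, the disjoint pair of complementary (n+1)-window sequences of period 2^n. Then T and T' contain conjugate (n+1)-tuples, i.e., there exist positions i and j such that the (n+1)-tuple of T at position i is the conjugate of the (n+1)-tuple of T' at position j. -/
/-! Put `s = D(t)`. As `t` has period `2^n`, `t(i)` is a function of the `n`-window of `s` at `i`,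
and `t(i+1) = t(i) ⊕ s(i)`. Conjugate `n`-windows of `s` at `i`, `j` with `t(i) = t(j)` lift to
conjugate `(n+1)`-windows of `t` and of its complement. Suppose instead that `t` always differs at
conjugate windows. Then the windows of `s` at `i+1` and `j+1` are the two extensions of one
`(n-1)`-tuple and `t` agrees on them, so `t(q)` only depends on the first `n-1` bits of the window
at `q`. Shifting in zeros from the left, which is possible since every `n`-tuple occurs in `s`,
shows that `t` takes everywhere its value at the window `0ⁿ`, contradicting that it differs at
conjugate windows. -/

theorem hasPer.eq_of_modEq {f : ℕ → Bool} {m a b : ℕ} (hf : hasPer f m) (hab : a ≡ b [MOD m]) :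
    f a = f b := by
  rw [← Function.Periodic.map_mod_nat hf a, ← Function.Periodic.map_mod_nat hf b, hab]

section Tuples

variable (s s' : ℕ → Bool) (n i j : ℕ)

theorem tup_succ_eq_cons : tup s (n + 1) i = Fin.cons (s i) (tup s n (i + 1)) := by
  ext k
  refine Fin.cases ?_ (fun k => ?_) k <;> simp [tup, Nat.add_assoc, Nat.add_comm 1]

theorem tup_succ_eq_snoc : tup s (n + 1) i = Fin.snoc (tup s n i) (s (i + n)) := by
  ext k
  refine Fin.lastCases ?_ (fun k => ?_) k <;> simp [tup]

theorem conjT_cons (a : Bool) (u : Fin n → Bool) :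
    conjT (Fin.cons a u : Fin (n + 1) → Bool) = Fin.cons (!a) u := by
  ext k
  refine Fin.cases ?_ (fun k => ?_) k <;> simp [conjT]

theorem tup_eq_conjT_tup_iff :
    tup s (n + 1) i = conjT (tup s' (n + 1) j) ↔ s i = !s' j ∧ tup s n (i + 1) = tup s' n (j + 1) := by
  rw [tup_succ_eq_cons, tup_succ_eq_cons, conjT_cons, Fin.cons_inj]

theorem tup_succ_eq_tup_succ_iff :
    tup s (n + 1) i = tup s' (n + 1) j ↔ tup s n i = tup s' n j ∧ s (i + n) = s' (j + n) := by
  rw [tup_succ_eq_snoc, tup_succ_eq_snoc, Fin.snoc_inj]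

end Tuples

theorem apply_succ_eq_xor_Dmap (t : ℕ → Bool) (i : ℕ) : t (i + 1) = xor (t i) (Dmap t i) := by
  unfold Dmap
  cases t i <;> cases t (i + 1) <;> rfl

theorem tup_eq_tup_seqCompl_of_tup_Dmap_eq {t : ℕ → Bool} {a b : ℕ} (hab : t a = !t b) {n : ℕ}
    (h : tup (Dmap t) n a = tup (Dmap t) n b) : tup t (n + 1) a = tup (seqCompl t) (n + 1) b := by
  induction n with
  | zero =>
    ext k
    fin_cases k
    simpa [tup, seqCompl] using hab
  | succ n ih =>
    obtain ⟨h, hlast⟩ := (tup_succ_eq_tup_succ_iff _ _ _ _ _).1 h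
    refine (tup_succ_eq_tup_succ_iff _ _ _ _ _).2 ⟨ih h, ?_⟩
    have hprev : t (a + n) = !t (b + n) := by
      simpa [tup, seqCompl] using congrFun (ih h) (Fin.last n)
    simp only [seqCompl, ← Nat.add_assoc, apply_succ_eq_xor_Dmap t (a + n),
      apply_succ_eq_xor_Dmap t (b + n), hprev, hlast, Bool.not_xor]

theorem tup_eq_conjT_tup_seqCompl {t : ℕ → Bool} {n i j : ℕ}
    (hij : tup (Dmap t) (n + 1) j = conjT (tup (Dmap t) (n + 1) i)) (ht : t j = t i) :
    tup t (n + 2) j = conjT (tup (seqCompl t) (n + 2) i) := by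
  obtain ⟨h0, htail⟩ := (tup_eq_conjT_tup_iff _ _ _ _ _).1 hij
  refine (tup_eq_conjT_tup_iff _ _ _ _ _).2 ⟨by simp [seqCompl, ht], ?_⟩
  refine tup_eq_tup_seqCompl_of_tup_Dmap_eq ?_ htail
  rw [apply_succ_eq_xor_Dmap t j, apply_succ_eq_xor_Dmap t i, ht, h0, Bool.xor_not]

namespace isNWindow

variable {s t : ℕ → Bool} {n m : ℕ}

theorem apply_eq_of_tup_eq (hs : isNWindow s n m) (ht : hasPer t m) {a b : ℕ}
    (hab : tup s n a = tup s n b) : t a = t b :=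
  ht.eq_of_modEq (hs.2 a b hab)

theorem exists_tup_eq (hs : isNWindow s n (2 ^ n)) (w : Fin n → Bool) : ∃ p, tup s n p = w := by
  have hinj : Function.Injective (fun p : Fin (2 ^ n) => tup s n p) := fun p q hpq =>
    Fin.ext ((hs.2 p q hpq).eq_of_lt_of_lt p.isLt q.isLt)
  obtain ⟨p, hp⟩ := ((Fintype.bijective_iff_injective_and_card _).2 ⟨hinj, by simp⟩).2 w
  exact ⟨p, hp⟩

theorem apply_add_eq_not_of_tup_eq_conjT (hs : isNWindow s (n + 1) m) {i j : ℕ}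
    (hij : tup s (n + 1) j = conjT (tup s (n + 1) i)) : s (j + 1 + n) = !s (i + 1 + n) := by
  obtain ⟨h0, htail⟩ := (tup_eq_conjT_tup_iff _ _ _ _ _).1 hij
  by_contra hne
  have hsucc : tup s (n + 1) (j + 1) = tup s (n + 1) (i + 1) :=
    (tup_succ_eq_tup_succ_iff _ _ _ _ _).2 ⟨htail, by simpa using hne⟩
  have hji : s j = s i := hs.1.2.1.eq_of_modEq (Nat.ModEq.add_right_cancel' 1 (hs.2 _ _ hsucc))
  simp [h0] at hji

end isNWindow

section ConjugateWindows

variable {t : ℕ → Bool} {n : ℕ}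

theorem apply_eq_of_tup_eq_tail (hs : isNWindow (Dmap t) (n + 1) (2 ^ (n + 1)))
    (ht : hasPer t (2 ^ (n + 1)))
    (H : ∀ i j, tup (Dmap t) (n + 1) j = conjT (tup (Dmap t) (n + 1) i) → t j ≠ t i)
    {i q : ℕ} (hq : tup (Dmap t) n q = tup (Dmap t) n (i + 1)) : t q = t (i + 1) := by
  obtain ⟨j, hj⟩ := hs.exists_tup_eq (conjT (tup (Dmap t) (n + 1) i))
  obtain ⟨h0, htail⟩ := (tup_eq_conjT_tup_iff _ _ _ _ _).1 hj
  by_cases hb : Dmap t (q + n) = Dmap t (i + 1 + n)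
  · exact hs.apply_eq_of_tup_eq ht ((tup_succ_eq_tup_succ_iff _ _ _ _ _).2 ⟨hq, hb⟩)
  · have hb' : Dmap t (q + n) = Dmap t (j + 1 + n) := by
      rw [hs.apply_add_eq_not_of_tup_eq_conjT hj]
      exact Bool.eq_not.2 hb
    have hqj : t q = t (j + 1) :=
      hs.apply_eq_of_tup_eq ht ((tup_succ_eq_tup_succ_iff _ _ _ _ _).2 ⟨hq.trans htail.symm, hb'⟩)
    rw [hqj, apply_succ_eq_xor_Dmap t j, apply_succ_eq_xor_Dmap t i, Bool.eq_not.2 (H i j hj), h0,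
      Bool.not_xor_not]

theorem exists_apply_eq_and_Dmap_eq_false (hs : isNWindow (Dmap t) (n + 1) (2 ^ (n + 1)))
    (ht : hasPer t (2 ^ (n + 1)))
    (H : ∀ i j, tup (Dmap t) (n + 1) j = conjT (tup (Dmap t) (n + 1) i) → t j ≠ t i)
    (r : ℕ) (hr : r ≤ n + 1) (q : ℕ) : ∃ p, t p = t q ∧ ∀ k < r, Dmap t (p + k) = false := by
  induction r with
  | zero => exact ⟨q, rfl, by simp⟩
  | succ r ih =>
    obtain ⟨p₁, hp₁, hzero⟩ := ih (by omega)
    obtain ⟨p, hp⟩ := hs.exists_tup_eq (Fin.cons false (tup (Dmap t) n p₁))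
    obtain ⟨hp0, htail⟩ := Fin.cons_inj.1 ((tup_succ_eq_cons _ _ _).symm.trans hp)
    refine ⟨p, ?_, fun k hk => ?_⟩
    · rw [← hp₁, apply_eq_of_tup_eq_tail hs ht H htail.symm, apply_succ_eq_xor_Dmap t p, hp0,
        Bool.xor_false]
    · cases k with
      | zero => exact hp0
      | succ k =>
        have hk' := congrFun htail ⟨k, by omega⟩
        simp only [tup] at hk'
        rw [← Nat.add_assoc, Nat.add_right_comm, hk']
        exact hzero k (by omega)

theorem exists_tup_eq_conjT_and_apply_eq (hs : isNWindow (Dmap t) (n + 1) (2 ^ (n + 1)))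
    (ht : hasPer t (2 ^ (n + 1))) :
    ∃ i j, tup (Dmap t) (n + 1) j = conjT (tup (Dmap t) (n + 1) i) ∧ t j = t i := by
  by_contra! H
  obtain ⟨z, hz⟩ := hs.exists_tup_eq (fun _ => false)
  have hconst : ∀ q, t q = t z := fun q => by
    obtain ⟨p, hpq, hp⟩ := exists_apply_eq_and_Dmap_eq_false hs ht H (n + 1) le_rfl q
    rw [← hpq]
    exact hs.apply_eq_of_tup_eq ht (hz ▸ funext fun k => hp k k.isLt)
  obtain ⟨j, hj⟩ := hs.exists_tup_eq (conjT (tup (Dmap t) (n + 1) z))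
  exact H z j hj (hconst j)

end ConjugateWindows

theorem conjugate_pair_general (n : ℕ) (s t t' : ℕ → Bool) (hn : 1 < n)
    (h : isNWindow s n (2 ^ n))
    (hD : Dinv s = {t, t'}) (hc : t' = seqCompl t)
    (hT : isNWindow t (n + 1) (2 ^ n)) :
    ∃ i j, tup t (n + 1) i = conjT (tup t' (n + 1) j) := by
  obtain ⟨n, rfl⟩ : ∃ k, n = k + 1 := ⟨n - 1, by omega⟩
  have hDt : t ∈ Dinv s := hD ▸ Set.mem_insert t {t'}
  change Dmap t = s at hDt
  subst hDt hc
  obtain ⟨i, j, hij, htij⟩ := exists_tup_eq_conjT_and_apply_eq h hT.1.2.1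
  exact ⟨j, i, tup_eq_conjT_tup_seqCompl hij htij⟩

/-- Lemma 1: if `S` is a de Bruijn sequence of order `n > 1` and
`D⁻¹(S) = {T, T'}` is the disjoint pair of complementary `(n+1)`-window
sequences of period `2^n`, then `T` and `T'` contain conjugate `(n+1)`-tuples. -/
theorem conjugate_pair (n : ℕ) (s t t' : ℕ → Bool) (hn : 1 < n)
    (h : isNWindow s n (2 ^ n))
    (hD : Dinv s = {t, t'}) (hne : t ≠ t') (hc : t' = seqCompl t)
    (hdisj : disjointSeq t t' (n + 1))
    (hT : isNWindow t (n + 1) (2 ^ n)) (hT' : isNWindow t' (n + 1) (2 ^ n)) :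
    ∃ i j, tup t (n + 1) i = conjT (tup t' (n + 1) j) :=
  conjugate_pair_general n s t t' hn h hD hc hT
end

section
/- Suppose S=(s_i) is an orientable sequence of order n and period m with w(S) odd. Then D^{-1}(S) consists of two different shifts of a single orientable sequence T of order n+1, period 2m and weight m; specifically, D^{-1}(S) = {T, T'} where T'_i = T_{i+m} for all i. -/
/-! The preimages of `S` under `D` are `T` and its complement, where `T i` is the parity of
`s 0 + ⋯ + s (i - 1)`. Odd weight makes `T` antiperiodic, `T (i + m) = !T i`, so the complement
is the shift of `T` by `m`, and `T` has period `2m` and weight `m`. An `(n+1)`-window of `T`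
determines the `n`-window of `S` at the same position, also under reversal, so orientability
lifts from `S` to `T`; antiperiodicity separates the positions `i` and `i + m`, which `S`
cannot tell apart. -/

theorem tup_Dmap (t : ℕ → Bool) (n i : ℕ) (k : Fin n) :
    tup (Dmap t) n i k = xor (tup t (n + 1) i k.castSucc) (tup t (n + 1) i k.succ) := by
  simp [tup, Dmap, add_assoc]

theorem tup_Dmap_eq_of_tup_eq {t : ℕ → Bool} {n i j : ℕ}
    (h : tup t (n + 1) i = tup t (n + 1) j) : tup (Dmap t) n i = tup (Dmap t) n j := by
  funext k
  rw [tup_Dmap, tup_Dmap, h]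

theorem tup_Dmap_eq_tupRev_of_tup_eq_tupRev {t : ℕ → Bool} {n i j : ℕ}
    (h : tup t (n + 1) i = tupRev (tup t (n + 1) j)) :
    tup (Dmap t) n i = tupRev (tup (Dmap t) n j) := by
  funext k
  simp only [tupRev, tup_Dmap, h, Fin.rev_castSucc, Fin.rev_succ, Bool.xor_comm]

theorem hasPer_Dmap {t : ℕ → Bool} {k : ℕ} (h : hasPer t k) : hasPer (Dmap t) k := by
  intro i
  simp [Dmap, h i, add_right_comm i k 1, h (i + 1)]

theorem Dmap_not (t : ℕ → Bool) : Dmap (fun i => !t i) = Dmap t := by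
  funext i
  simp [Dmap]

theorem eq_or_eq_not_of_Dmap_eq {t u : ℕ → Bool} (h : Dmap t = Dmap u) :
    t = u ∨ t = fun i => !u i := by
  have step : ∀ i, xor (t (i + 1)) (u (i + 1)) = xor (t i) (u i) := by
    intro i
    have hi := congrFun h i
    simp only [Dmap] at hi
    revert hi
    cases t i <;> cases t (i + 1) <;> cases u i <;> cases u (i + 1) <;> decide
  have const : ∀ i, xor (t i) (u i) = xor (t 0) (u 0) := by
    intro i
    induction i with
    | zero => rfl
    | succ i ih => rw [step, ih]
  cases h0 : xor (t 0) (u 0)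
  · left
    funext i
    simpa [h0] using const i
  · right
    funext i
    have hi := const i
    rw [h0] at hi
    revert hi
    cases t i <;> cases u i <;> decide

theorem Dinv_Dmap (t : ℕ → Bool) : Dinv (Dmap t) = {t, fun i => !t i} := by
  ext u
  simp only [Dinv, Set.mem_ofPred_eq, Set.mem_insert_iff, Set.mem_singleton_iff]
  constructor
  · exact eq_or_eq_not_of_Dmap_eq
  · rintro (rfl | rfl)
    · rfl
    · exact Dmap_not t

section Antiperiodic

variable {t : ℕ → Bool} {m : ℕ}

theorem hasPer_Dmap_of_antiperiodic (ht : ∀ i, t (i + m) = !t i) : hasPer (Dmap t) m := by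
  intro i
  simp [Dmap, ht, add_right_comm i m 1]

theorem antiperiodic_add_mul (ht : ∀ i, t (i + m) = !t i) (i q : ℕ) :
    t (i + m * q) = xor (t i) (decide (Odd q)) := by
  induction q with
  | zero => simp
  | succ q ih =>
    rw [Nat.mul_succ, ← add_assoc, ht, ih]
    cases t i <;> simp [Nat.odd_add_one, ← Nat.not_even_iff_odd]

theorem isPeriod_of_antiperiodic (ht : ∀ i, t (i + m) = !t i) (h : isPeriod (Dmap t) m) :
    isPeriod t (2 * m) := by
  obtain ⟨hm, -, hmin⟩ := h
  refine ⟨by omega, fun i => by rw [two_mul, ← add_assoc, ht, ht, Bool.not_not], ?_⟩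
  intro k hk htk
  by_contra! hlt
  have hmk : m ≤ k := hmin k hk (hasPer_Dmap htk)
  -- shifting by `k - m` complements `t`, so `Dmap t` has the period `k - m < m`
  have hd : ∀ i, t (i + (k - m)) = !t i := by
    intro i
    rw [← Bool.not_not (t (i + (k - m))), ← ht, add_assoc, Nat.sub_add_cancel hmk, htk]
  rcases Nat.eq_zero_or_pos (k - m) with h0 | hpos
  · simpa [h0] using hd 0
  · exact absurd (hmin _ hpos (hasPer_Dmap_of_antiperiodic hd)) (by omega)

theorem modEq_two_mul_of_antiperiodic (ht : ∀ i, t (i + m) = !t i) {i j : ℕ}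
    (hmod : i ≡ j [MOD m]) (hij : t i = t j) : i ≡ j [MOD 2 * m] := by
  wlog hle : i ≤ j generalizing i j
  · exact (this hmod.symm hij.symm (by omega)).symm
  obtain ⟨q, hq⟩ := (Nat.modEq_iff_dvd' hle).mp hmod
  have hj : j = i + m * q := by omega
  have hq_even : Even q := by
    rw [hj, antiperiodic_add_mul ht] at hij
    by_contra hodd
    simp [Nat.not_even_iff_odd.mp hodd] at hij
  obtain ⟨r, rfl⟩ := hq_even
  exact (Nat.modEq_iff_dvd' hle).mpr ⟨r, by rw [hq]; ring⟩

theorem isOrientable_of_isOrientable_Dmap {n : ℕ} (ht : ∀ i, t (i + m) = !t i)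
    (h : isOrientable (Dmap t) n m) : isOrientable t (n + 1) (2 * m) := by
  obtain ⟨⟨hper, hwin⟩, hrev⟩ := h
  refine ⟨⟨isPeriod_of_antiperiodic ht hper, fun i j hij => ?_⟩, fun i j hij => ?_⟩
  · exact modEq_two_mul_of_antiperiodic ht (hwin i j (tup_Dmap_eq_of_tup_eq hij))
      (by simpa [tup] using congrFun hij 0)
  · exact hrev i j (tup_Dmap_eq_tupRev_of_tup_eq_tupRev hij)

theorem wt_two_mul_of_antiperiodic (ht : ∀ i, t (i + m) = !t i) : wt t (2 * m) = m := by
  rw [wt, two_mul, Finset.sum_range_add, ← Finset.sum_add_distrib]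
  calc ∑ i ∈ Finset.range m, ((if t i then 1 else 0) + if t (m + i) then 1 else 0)
      = ∑ _i ∈ Finset.range m, 1 :=
        Finset.sum_congr rfl fun i _ => by rw [add_comm m i, ht]; cases t i <;> rfl
    _ = m := by simp

end Antiperiodic

def wtParity (s : ℕ → Bool) : ℕ → Bool := fun i => decide (Odd (wt s i))

theorem Dmap_wtParity (s : ℕ → Bool) : Dmap (wtParity s) = s := by
  funext i
  simp only [Dmap, wtParity, wt, Finset.sum_range_succ]
  cases s i <;> simp [Nat.odd_add_one, ← Nat.not_even_iff_odd]

theorem wt_add_of_hasPer {s : ℕ → Bool} {m : ℕ} (hs : hasPer s m) (i : ℕ) :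
    wt s (m + i) = wt s m + wt s i := by
  rw [wt, Finset.sum_range_add]
  congr 1
  exact Finset.sum_congr rfl fun x _ => by rw [add_comm, hs]

theorem wtParity_add_of_odd {s : ℕ → Bool} {m : ℕ} (hs : hasPer s m) (hw : Odd (wt s m))
    (i : ℕ) : wtParity s (i + m) = !wtParity s i := by
  simp [wtParity, add_comm i m, wt_add_of_hasPer hs, Nat.odd_add, hw, ← Nat.not_odd_iff_even]

/-- Theorem 4, odd case: if `S` is an orientable sequence of order `n` and
period `m` with odd weight, then `D⁻¹(S)` consists of two different shifts (by
`m`) of a single orientable sequence of order `n+1`, period `2m` and weight `m`. -/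
theorem lempel_orientable_odd (n m : ℕ) (s : ℕ → Bool)
    (h : isOrientable s n m) (hw : Odd (wt s m)) :
    ∃ t : ℕ → Bool, isOrientable t (n + 1) (2 * m) ∧ wt t (2 * m) = m ∧
      t ≠ (fun i => t (i + m)) ∧ Dinv s = {t, fun i => t (i + m)} := by
  have hper : hasPer s m := h.1.1.2.1
  have hT : ∀ i, wtParity s (i + m) = !wtParity s i := wtParity_add_of_odd hper hw
  have hDT : Dmap (wtParity s) = s := Dmap_wtParity s
  refine ⟨wtParity s, isOrientable_of_isOrientable_Dmap hT (by rwa [hDT]),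
    wt_two_mul_of_antiperiodic hT, ?_, ?_⟩
  · rw [funext hT]
    intro hne
    simpa using congrFun hne 0
  · rw [funext hT, ← Dinv_Dmap, hDT]
end

section
/- Suppose n ≥ 4 and S=(s_i) is an orientable sequence of order n with period m. Then there is at most one index i with 0 ≤ i < m such that s_i = s_{i+1} = ... = s_{i+n-4} = 1, i.e., the tuple 1^{n-3} occurs at most once in a period of S. -/
/-- Remark: an orientable sequence of order `n ≥ 4` contains at most one
occurrence of the tuple `1^(n-3)` in a period, i.e. there is at most one index
`i` with `0 ≤ i < m` and `s_i = s_{i+1} = ⋯ = s_{i+n-4} = 1`. -/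
theorem at_most_one_ones_run (n m : ℕ) (s : ℕ → Bool) (hn : 4 ≤ n)
    (h : isOrientable s n m) :
    ∀ i j, i < m → j < m → (∀ k, k < n - 3 → s (i + k) = true) →
      (∀ k, k < n - 3 → s (j + k) = true) → i = j := by
  obtain ⟨⟨⟨hm, hper, -⟩, hW⟩, hO⟩ := h
  have sP : ∀ t, s (t + m) = s t := hper
  have sP2 : ∀ t, s (t + 2 * m) = s t := by
    intro t
    rw [show t + 2 * m = t + m + m by ring, sP, sP]
  -- no run of n ones
  have B : ∀ p, ¬ (∀ k, k < n → s (p + k) = true) := by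
    intro p hp
    apply hO p p
    funext k
    simp only [tup, tupRev]
    rw [hp k k.isLt, hp _ (k.rev).isLt]
  -- no run of n-1 ones
  have C : ∀ p, ¬ (∀ k, k < n - 1 → s (p + k) = true) := by
    intro p hp
    have hq0 : s (p + m - 1) = false := by
      by_contra hc
      simp only [Bool.not_eq_false] at hc
      apply B (p + m - 1)
      intro k hk
      rcases Nat.eq_zero_or_pos k with rfl | hk1
      · simpa using hc
      · rw [show p + m - 1 + k = p + (k - 1) + m by omega, sP]
        exact hp (k - 1) (by omega)
    have hq1 : s (p + (n - 1)) = false := by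
      by_contra hc
      simp only [Bool.not_eq_false] at hc
      apply B p
      intro k hk
      by_cases hk' : k < n - 1
      · exact hp k hk'
      · rw [show k = n - 1 by omega]; exact hc
    apply hO (p + m - 1) p
    funext k
    obtain ⟨k, hk⟩ := k
    simp only [tup, tupRev, Fin.val_rev]
    rcases Nat.eq_zero_or_pos k with rfl | hk1
    · rw [show p + m - 1 + 0 = p + m - 1 by omega, hq0,
        show p + (n - (0 + 1)) = p + (n - 1) by omega, hq1]
    · rw [show p + m - 1 + k = p + (k - 1) + m by omega, sP,
        hp (k - 1) (by omega), hp (n - (k + 1)) (by omega)]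
  -- no run of n-2 ones
  have D : ∀ p, ¬ (∀ k, k < n - 2 → s (p + k) = true) := by
    intro p hp
    have hq0 : s (p + m - 1) = false := by
      by_contra hc
      simp only [Bool.not_eq_false] at hc
      apply C (p + m - 1)
      intro k hk
      rcases Nat.eq_zero_or_pos k with rfl | hk1
      · simpa using hc
      · rw [show p + m - 1 + k = p + (k - 1) + m by omega, sP]
        exact hp (k - 1) (by omega)
    have hq1 : s (p + (n - 2)) = false := by
      by_contra hc
      simp only [Bool.not_eq_false] at hc
      apply C p
      intro k hk
      by_cases hk' : k < n - 2
      · exact hp k hk'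
      · rw [show k = n - 2 by omega]; exact hc
    apply hO (p + m - 1) (p + m - 1)
    funext k
    obtain ⟨k, hk⟩ := k
    simp only [tup, tupRev, Fin.val_rev]
    rcases Nat.eq_zero_or_pos k with rfl | hk1
    · rw [show p + m - 1 + 0 = p + m - 1 by omega, hq0,
        show p + m - 1 + (n - (0 + 1)) = p + (n - 2) + m by omega, sP, hq1]
    rcases Nat.lt_or_ge k (n - 1) with hk2 | hk2
    · rw [show p + m - 1 + k = p + (k - 1) + m by omega, sP,
        hp (k - 1) (by omega),
        show p + m - 1 + (n - (k + 1)) = p + (n - k - 2) + m by omega, sP,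
        hp (n - k - 2) (by omega)]
    · rw [show k = n - 1 by omega,
        show p + m - 1 + (n - 1) = p + (n - 2) + m by omega, sP, hq1,
        show p + m - 1 + (n - (n - 1 + 1)) = p + m - 1 by omega, hq0]
  -- main argument
  intro i j him hjm hi hj
  have e1 : s (i + 2 * m - 1) = false := by
    by_contra hc
    simp only [Bool.not_eq_false] at hc
    apply D (i + 2 * m - 1)
    intro k hk
    rcases Nat.eq_zero_or_pos k with rfl | hk1
    · simpa using hc
    · rw [show i + 2 * m - 1 + k = i + (k - 1) + 2 * m by omega, sP2]
      exact hi (k - 1) (by omega)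
  have e2 : s (i + (n - 3)) = false := by
    by_contra hc
    simp only [Bool.not_eq_false] at hc
    apply D i
    intro k hk
    by_cases hk' : k < n - 3
    · exact hi k hk'
    · rw [show k = n - 3 by omega]; exact hc
  have f1 : s (j + 2 * m - 1) = false := by
    by_contra hc
    simp only [Bool.not_eq_false] at hc
    apply D (j + 2 * m - 1)
    intro k hk
    rcases Nat.eq_zero_or_pos k with rfl | hk1
    · simpa using hc
    · rw [show j + 2 * m - 1 + k = j + (k - 1) + 2 * m by omega, sP2]
      exact hj (k - 1) (by omega)
  have f2 : s (j + (n - 3)) = false := by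
    by_contra hc
    simp only [Bool.not_eq_false] at hc
    apply D j
    intro k hk
    by_cases hk' : k < n - 3
    · exact hj k hk'
    · rw [show k = n - 3 by omega]; exact hc
  -- s (i+2m-2) differs from s (i+(n-2)) and from s (j+(n-2))
  have hax : s (i + 2 * m - 2) ≠ s (i + (n - 2)) := by
    intro hc
    apply hO (i + 2 * m - 2) (i + 2 * m - 1)
    funext k
    obtain ⟨k, hk⟩ := k
    simp only [tup, tupRev, Fin.val_rev]
    rcases Nat.eq_zero_or_pos k with rfl | hk1
    · rw [show i + 2 * m - 2 + 0 = i + 2 * m - 2 by omega,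
        show i + 2 * m - 1 + (n - (0 + 1)) = i + (n - 2) + 2 * m by omega, sP2]
      exact hc
    rcases Nat.lt_or_ge k 2 with hk2 | hk2
    · rw [show k = 1 by omega,
        show i + 2 * m - 2 + 1 = i + 2 * m - 1 by omega, e1,
        show i + 2 * m - 1 + (n - (1 + 1)) = i + (n - 3) + 2 * m by omega, sP2, e2]
    rcases Nat.lt_or_ge k (n - 1) with hk3 | hk3
    · rw [show i + 2 * m - 2 + k = i + (k - 2) + 2 * m by omega, sP2,
        hi (k - 2) (by omega),
        show i + 2 * m - 1 + (n - (k + 1)) = i + (n - k - 2) + 2 * m by omega, sP2,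
        hi (n - k - 2) (by omega)]
    · rw [show k = n - 1 by omega,
        show i + 2 * m - 2 + (n - 1) = i + (n - 3) + 2 * m by omega, sP2, e2,
        show i + 2 * m - 1 + (n - (n - 1 + 1)) = i + 2 * m - 1 by omega, e1]
  have hay : s (i + 2 * m - 2) ≠ s (j + (n - 2)) := by
    intro hc
    apply hO (i + 2 * m - 2) (j + 2 * m - 1)
    funext k
    obtain ⟨k, hk⟩ := k
    simp only [tup, tupRev, Fin.val_rev]
    rcases Nat.eq_zero_or_pos k with rfl | hk1
    · rw [show i + 2 * m - 2 + 0 = i + 2 * m - 2 by omega,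
        show j + 2 * m - 1 + (n - (0 + 1)) = j + (n - 2) + 2 * m by omega, sP2]
      exact hc
    rcases Nat.lt_or_ge k 2 with hk2 | hk2
    · rw [show k = 1 by omega,
        show i + 2 * m - 2 + 1 = i + 2 * m - 1 by omega, e1,
        show j + 2 * m - 1 + (n - (1 + 1)) = j + (n - 3) + 2 * m by omega, sP2, f2]
    rcases Nat.lt_or_ge k (n - 1) with hk3 | hk3
    · rw [show i + 2 * m - 2 + k = i + (k - 2) + 2 * m by omega, sP2,
        hi (k - 2) (by omega),
        show j + 2 * m - 1 + (n - (k + 1)) = j + (n - k - 2) + 2 * m by omega, sP2,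
        hj (n - k - 2) (by omega)]
    · rw [show k = n - 1 by omega,
        show i + 2 * m - 2 + (n - 1) = i + (n - 3) + 2 * m by omega, sP2, e2,
        show j + 2 * m - 1 + (n - (n - 1 + 1)) = j + 2 * m - 1 by omega, f1]
  have hxy : s (i + (n - 2)) = s (j + (n - 2)) := by
    cases hx : s (i + (n - 2)) <;> cases hy : s (j + (n - 2)) <;>
      cases ha : s (i + 2 * m - 2) <;> simp_all
  -- the two windows at i+2m-1 and j+2m-1 coincide
  have ht : tup s n (i + 2 * m - 1) = tup s n (j + 2 * m - 1) := by
    funext k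
    obtain ⟨k, hk⟩ := k
    simp only [tup]
    rcases Nat.eq_zero_or_pos k with rfl | hk1
    · rw [show i + 2 * m - 1 + 0 = i + 2 * m - 1 by omega, e1,
        show j + 2 * m - 1 + 0 = j + 2 * m - 1 by omega, f1]
    rcases Nat.lt_or_ge k (n - 2) with hk2 | hk2
    · rw [show i + 2 * m - 1 + k = i + (k - 1) + 2 * m by omega, sP2,
        hi (k - 1) (by omega),
        show j + 2 * m - 1 + k = j + (k - 1) + 2 * m by omega, sP2,
        hj (k - 1) (by omega)]
    rcases Nat.lt_or_ge k (n - 1) with hk3 | hk3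
    · rw [show k = n - 2 by omega,
        show i + 2 * m - 1 + (n - 2) = i + (n - 3) + 2 * m by omega, sP2, e2,
        show j + 2 * m - 1 + (n - 2) = j + (n - 3) + 2 * m by omega, sP2, f2]
    · rw [show k = n - 1 by omega,
        show i + 2 * m - 1 + (n - 1) = i + (n - 2) + 2 * m by omega, sP2,
        show j + 2 * m - 1 + (n - 1) = j + (n - 2) + 2 * m by omega, sP2]
      exact hxy
  have hmod := hW _ _ ht
  have hmod1 : i + 2 * m ≡ j + 2 * m [MOD m] := by
    have := hmod.add_right 1
    rwa [show i + 2 * m - 1 + 1 = i + 2 * m by omega,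
      show j + 2 * m - 1 + 1 = j + 2 * m by omega] at this
  have hij : i ≡ j [MOD m] := Nat.ModEq.add_right_cancel' (2 * m) hmod1
  have : i % m = j % m := hij
  rwa [Nat.mod_eq_of_lt him, Nat.mod_eq_of_lt hjm] at this
end

section
/- Suppose S=(s_i) is an orientable sequence of order n and period m such that the (n-4)-tuple 1^{n-4} occurs exactly once in a period of S (and hence S contains no run of 1s of length exceeding n-4). Then E(S) is an orientable sequence of order n of odd weight, whose period is m if w(S) is odd and m+1 if w(S) is even. -/
/-- `1^len` occurs at position `i` of `s`. -/
def occOnes (s : ℕ → Bool) (len i : ℕ) : Prop := ∀ k, k < len → s (i + k) = true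

/-- `0^len` occurs at position `i` of `s`. -/
def occZeros (s : ℕ → Bool) (len i : ℕ) : Prop := ∀ k, k < len → s (i + k) = false

/-- The periodic sequence of period dividing `m + 1` obtained from the generating cycle
`[s_0, ..., s_{r-1}, 1, s_r, ..., s_{m-1}]`, i.e. by inserting an extra `1` at
position `r` of the generating cycle `[s_0, ..., s_{m-1}]`. -/
def insertAt (s : ℕ → Bool) (m r : ℕ) : ℕ → Bool := fun i =>
  if i % (m + 1) < r then s (i % (m + 1))
  else if i % (m + 1) = r then true
  else s (i % (m + 1) - 1)

/-!
Rotate `S` so that its unique run `1^(n-4)` starts at position `0`. Since `1^(n-4)` occurs only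
once, `1^(n-3)` does not occur, so the run is flanked by zeros and a period reads `1^(n-4) 0 w 0`;
for `m < n` this cycle is its own reversal, hence `n ≤ m`. After the extra `1` is inserted, an
`n`-window either misses part of the run `1^(n-3)`, and is then an `n`-window of `S`, or it is
one of four windows containing the whole run, which no window of `S` (or its reverse) does. These
four are distinct and pairwise non-reversed because the zeros flanking the run sit at different
offsets, except for two pairs, where a reversal would already give reversed windows in `S`.
The weight grows by one, and it is odd when `n = 5`, so only `n ≥ 6` needs the insertion.
-/

section Windows

variable {s t : ℕ → Bool} {n m : ℕ}

lemma tupRev_tupRev (u : Fin n → Bool) : tupRev (tupRev u) = u := by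
  funext k
  simp [tupRev]

lemma eq_tupRev_comm {u v : Fin n → Bool} : u = tupRev v ↔ v = tupRev u := by
  constructor <;> rintro rfl <;> exact (tupRev_tupRev _).symm

lemma hasPer.apply_mod (hper : hasPer s m) (i : ℕ) : s (i % m) = s i :=
  Function.Periodic.map_mod_nat hper i

lemma tup_eq_of_modEq (hper : hasPer s m) {i j : ℕ} (h : i ≡ j [MOD m]) :
    tup s n i = tup s n j := by
  funext k
  simp only [tup]
  rw [← hper.apply_mod (i + k), ← hper.apply_mod (j + k)]
  exact congrArg s (h.add_right _)

lemma tup_shift (s : ℕ → Bool) (n r i : ℕ) :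
    tup (fun x => s (r + x)) n i = tup s n (r + i) := by
  funext k
  simp only [tup, Nat.add_assoc]

lemma occOnes_shift {L r i : ℕ} : occOnes (fun x => s (r + x)) L i ↔ occOnes s L (r + i) := by
  simp only [occOnes, Nat.add_assoc]

lemma occOnes_of_tup_eq {i j d L : ℕ} (h : tup s n i = tup t n j) (hdL : d + L ≤ n)
    (ht : occOnes t L (j + d)) : occOnes s L (i + d) := by
  intro k hk
  have hk' := congrFun h ⟨d + k, by omega⟩
  simp only [tup] at hk'
  rw [Nat.add_assoc, hk', ← Nat.add_assoc]
  exact ht k hk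

lemma occOnes_of_tup_eq_tupRev {i j d L : ℕ} (h : tup s n i = tupRev (tup t n j))
    (hdL : d + L ≤ n) (ht : occOnes t L (j + d)) : occOnes s L (i + (n - d - L)) := by
  intro k hk
  have hk' := congrFun h ⟨n - d - L + k, by omega⟩
  simp only [tup, tupRev, Fin.val_rev] at hk'
  rw [Nat.add_assoc, hk', show j + (n - (n - d - L + k + 1)) = j + d + (L - 1 - k) by omega]
  exact ht _ (by omega)

lemma isOrientable_of_hasPer (hm : 0 < m) (hper : hasPer s m)
    (hinj : ∀ i j, tup s n i = tup s n j → i ≡ j [MOD m])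
    (hrev : ∀ i j, tup s n i ≠ tupRev (tup s n j)) : isOrientable s n m := by
  refine ⟨⟨⟨hm, hper, fun k hk hperk => Nat.le_of_dvd hk ?_⟩, hinj⟩, hrev⟩
  have hshift : tup s n k = tup s n 0 := by
    funext j
    simp only [tup, Nat.add_comm k, Nat.zero_add]
    exact hperk j
  exact Nat.modEq_zero_iff_dvd.mp (hinj _ _ hshift)

lemma isOrientable_of_Icc (hm : 0 < m) (hper : hasPer s m)
    (hinj : ∀ x y, 1 ≤ x → x ≤ m → 1 ≤ y → y ≤ m → tup s n x = tup s n y → x = y)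
    (hrev : ∀ x y, 1 ≤ x → x ≤ m → 1 ≤ y → y ≤ m → tup s n x ≠ tupRev (tup s n y)) :
    isOrientable s n m := by
  have hrep : ∀ i, ∃ x, 1 ≤ x ∧ x ≤ m ∧ i ≡ x [MOD m] := fun i => by
    refine ⟨(i + m - 1) % m + 1, by omega, Nat.mod_lt _ hm, ?_⟩
    have h := (Nat.mod_modEq (i + m - 1) m).add_right 1
    rw [show i + m - 1 + 1 = i + m by omega] at h
    exact (h.trans Nat.add_modEq_right).symm
  refine isOrientable_of_hasPer hm hper (fun i j hij => ?_) (fun i j => ?_)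
  · obtain ⟨x, hx1, hx2, hix⟩ := hrep i
    obtain ⟨y, hy1, hy2, hjy⟩ := hrep j
    rw [tup_eq_of_modEq hper hix, tup_eq_of_modEq hper hjy] at hij
    rw [hinj x y hx1 hx2 hy1 hy2 hij] at hix
    exact hix.trans hjy.symm
  · obtain ⟨x, hx1, hx2, hix⟩ := hrep i
    obtain ⟨y, hy1, hy2, hjy⟩ := hrep j
    rw [tup_eq_of_modEq hper hix, tup_eq_of_modEq hper hjy]
    exact hrev x y hx1 hx2 hy1 hy2

lemma isOrientable.shift (h : isOrientable s n m) (r : ℕ) :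
    isOrientable (fun x => s (r + x)) n m := by
  obtain ⟨⟨⟨hm, hper, -⟩, hinj⟩, hrev⟩ := h
  refine isOrientable_of_hasPer hm (fun i => ?_) (fun i j hij => ?_) (fun i j => ?_)
  · simp only [← Nat.add_assoc, hper (r + i)]
  · rw [tup_shift, tup_shift] at hij
    exact Nat.ModEq.add_left_cancel' r (hinj _ _ hij)
  · rw [tup_shift, tup_shift]
    exact hrev _ _

lemma isOrientable.two_le (h : isOrientable s n m) : 2 ≤ m := by
  obtain ⟨⟨⟨hm, hper, -⟩, -⟩, hrev⟩ := h
  by_contra hlt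
  have hconst : ∀ i, s i = s 0 := fun i => by
    rw [← hper.apply_mod, show m = 1 by omega, Nat.mod_one]
  exact hrev 0 0 (funext fun k => by simp only [tup, tupRev, hconst])

lemma exists_tup_eq_tupRev_of_reflect {c : ℕ} (hm : 0 < m)
    (hsym : ∀ x y, x + y ≡ c [MOD m] → s x = s y) : ∃ j, tup s n 0 = tupRev (tup s n j) := by
  refine ⟨c + m * n - (n - 1), funext fun k => hsym _ _ ?_⟩
  have hk := k.isLt
  have hmn : n ≤ m * n := Nat.le_mul_of_pos_left n hm
  simp only [Fin.val_rev]
  rw [show 0 + k + (c + m * n - (n - 1) + (n - (k + 1))) = c + m * n by omega]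
  exact Nat.add_mul_mod_self_left c m n

end Windows

section Runs

variable {s : ℕ → Bool} {m L r : ℕ}

lemma occOnes_mod (hper : hasPer s m) {i : ℕ} (h : occOnes s L i) : occOnes s L (i % m) := by
  intro k hk
  rw [← hper.apply_mod, Nat.mod_add_mod, hper.apply_mod]
  exact h k hk

lemma occOnes_modEq_of_unique (hper : hasPer s m) (hm : 0 < m)
    (huniq : ∀ i, i < m → occOnes s L i → i = r) {i j : ℕ}
    (hi : occOnes s L i) (hj : occOnes s L j) : i ≡ j [MOD m] :=
  (huniq _ (Nat.mod_lt _ hm) (occOnes_mod hper hi)).trans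
    (huniq _ (Nat.mod_lt _ hm) (occOnes_mod hper hj)).symm

lemma not_modEq_succ (hm : 2 ≤ m) (i : ℕ) : ¬ i ≡ i + 1 [MOD m] := by
  intro h
  have h1 : m ∣ i + 1 - i := (Nat.modEq_iff_dvd' (Nat.le_succ i)).mp h
  rw [Nat.add_sub_cancel_left] at h1
  have := Nat.le_of_dvd one_pos h1
  omega

lemma not_occOnes_succ (hm : 2 ≤ m)
    (hcong : ∀ i j, occOnes s L i → occOnes s L j → i ≡ j [MOD m]) (i : ℕ) :
    ¬ occOnes s (L + 1) i := by
  intro h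
  refine not_modEq_succ hm i (hcong _ _ (fun k hk => h k (by omega)) fun k hk => ?_)
  rw [show i + 1 + k = i + (k + 1) by omega]
  exact h (k + 1) (by omega)

lemma wt_eq_one (hr : r < m) (hsr : s r = true) (huniq : ∀ i, i < m → s i = true → i = r) :
    wt s m = 1 := by
  unfold wt
  rw [Finset.sum_eq_single_of_mem r (Finset.mem_range.mpr hr) fun i hi hir => ?_, hsr, if_pos rfl]
  rw [if_neg fun hsi => hir (huniq i (Finset.mem_range.mp hi) hsi)]

end Runs

section Insert

variable {s : ℕ → Bool} {m r i : ℕ}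

lemma insertAt_periodic (s : ℕ → Bool) (m r : ℕ) : hasPer (insertAt s m r) (m + 1) := fun i => by
  simp only [insertAt, Nat.add_mod_right]

lemma insertAt_of_lt (hir : i < r) (hr : r ≤ m) : insertAt s m r i = s i := by
  simp [insertAt, Nat.mod_eq_of_lt (show i < m + 1 by omega), hir]

lemma insertAt_self (hr : r ≤ m) : insertAt s m r r = true := by
  simp [insertAt, Nat.mod_eq_of_lt (show r < m + 1 by omega)]

lemma insertAt_of_lt_of_le (hri : r < i) (him : i ≤ m) : insertAt s m r i = s (i - 1) := by
  have hir : ¬ i < r := by omega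
  have hne : i ≠ r := by omega
  simp [insertAt, Nat.mod_eq_of_lt (show i < m + 1 by omega), hir, hne]

lemma wt_insertAt (hr : r ≤ m) : wt (insertAt s m r) (m + 1) = wt s m + 1 := by
  have hlow : ∑ i ∈ Finset.range r, (if insertAt s m r i then 1 else 0) =
      ∑ i ∈ Finset.range r, (if s i then 1 else 0) :=
    Finset.sum_congr rfl fun i hi => by rw [insertAt_of_lt (Finset.mem_range.mp hi) hr]
  have hhigh : ∑ i ∈ Finset.Ico (r + 1) (m + 1), (if insertAt s m r i then 1 else 0) =
      ∑ i ∈ Finset.Ico r m, (if s i then 1 else 0) := by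
    rw [← Finset.sum_Ico_add']
    refine Finset.sum_congr rfl fun i hi => ?_
    rw [Finset.mem_Ico] at hi
    rw [insertAt_of_lt_of_le (by omega) (by omega), Nat.add_sub_cancel]
  unfold wt
  rw [← Finset.sum_range_add_sum_Ico _ (show r ≤ m + 1 by omega),
    Finset.sum_eq_sum_Ico_succ_bot (show r < m + 1 by omega), insertAt_self hr, hlow, hhigh,
    ← Finset.sum_range_add_sum_Ico _ hr, if_pos rfl]
  ring

lemma insertAt_eq_shift (hper : hasPer s m) (hr : r ≤ m) :
    insertAt s m r = fun x => insertAt (fun i => s (r + i)) m 0 (m + 1 - r + x) := by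
  have hper' : hasPer (fun x => insertAt (fun i => s (r + i)) m 0 (m + 1 - r + x)) (m + 1) :=
    fun x => by simp only [← Nat.add_assoc]; exact insertAt_periodic _ m 0 (m + 1 - r + x)
  funext x
  rw [← (insertAt_periodic s m r).apply_mod, ← hper'.apply_mod]
  have hx : x % (m + 1) < m + 1 := Nat.mod_lt _ (Nat.succ_pos m)
  generalize x % (m + 1) = y at hx ⊢
  rcases lt_trichotomy y r with hyr | rfl | hyr
  · rw [insertAt_of_lt hyr hr, insertAt_of_lt_of_le (by omega) (by omega),
      show r + (m + 1 - r + y - 1) = y + m by omega, hper]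
  · rw [insertAt_self hr, show m + 1 - y + y = 0 + (m + 1) by omega, insertAt_periodic,
      insertAt_self (Nat.zero_le m)]
  · rw [insertAt_of_lt_of_le hyr (by omega), show m + 1 - r + y = y - r + (m + 1) by omega,
      insertAt_periodic, insertAt_of_lt_of_le (by omega) (by omega),
      show r + (y - r - 1) = y - 1 by omega]

end Insert

section IsolatedRun

variable {s : ℕ → Bool} {n m p : ℕ}

lemma run_end_eq_false (hrun : occOnes s (n - 4) 0) (hno : ∀ i, ¬ occOnes s (n - 3) i)
    (hn : 4 ≤ n) : s (n - 4) = false := by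
  by_contra h
  refine hno 0 fun k hk => ?_
  rcases (show k < n - 4 ∨ k = n - 4 by omega) with hk | rfl
  · exact hrun k hk
  · simpa using h

lemma run_pred_eq_false (hper : hasPer s m) (hm : 0 < m) (hrun : occOnes s (n - 4) 0)
    (hno : ∀ i, ¬ occOnes s (n - 3) i) : s (m - 1) = false := by
  by_contra h
  refine hno (m - 1) fun k hk => ?_
  rcases Nat.eq_zero_or_pos k with rfl | hk0
  · simpa using h
  · rw [show m - 1 + k = k - 1 + m by omega, hper]
    simpa using hrun (k - 1) (by omega)

lemma le_period_of_run (h : isOrientable s n m) (hn : 5 ≤ n) (hrun : occOnes s (n - 4) 0)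
    (hno : ∀ i, ¬ occOnes s (n - 3) i) : n ≤ m := by
  obtain ⟨⟨⟨hm, hper, -⟩, -⟩, hrev⟩ := h
  have hend := run_end_eq_false hrun hno (by omega)
  have hpred := run_pred_eq_false hper hm hrun hno
  have hone : ∀ k, k < n - 4 → s k = true := fun k hk => by simpa using hrun k hk
  by_contra! hmn
  have hm3 : n - 3 ≤ m := by
    by_contra! hlt
    have := Nat.mod_lt (n - 4) hm
    rw [← hper.apply_mod, hone _ (by omega)] at hend
    exact Bool.noConfusion hend
  -- a period now reads `1^(n-4) 0 w 0` with `w` of length at most one: it is its own reversal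
  obtain ⟨j, hj⟩ := exists_tup_eq_tupRev_of_reflect (s := s) (n := n) (c := n - 5) hm fun x y hxy => by
    rw [← hper.apply_mod x, ← hper.apply_mod y]
    have hx := Nat.mod_lt x hm
    have hy := Nat.mod_lt y hm
    have hsum : x % m + y % m = n - 5 ∨ x % m + y % m = n - 5 + m := by
      have h' : (x % m + y % m) % m = n - 5 := by
        rw [← Nat.add_mod, hxy, Nat.mod_eq_of_lt (by omega)]
      rcases lt_or_ge (x % m + y % m) m with hlt | hge
      · rw [Nat.mod_eq_of_lt hlt] at h'
        omega
      · rw [Nat.mod_eq_sub_mod hge, Nat.mod_eq_of_lt (by omega)] at h'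
        omega
    generalize x % m = k at hx hsum
    generalize y % m = l at hy hsum
    rcases (by omega : (k < n - 4 ∧ l < n - 4) ∨ (k = n - 4 ∧ l = m - 1) ∨
        (k = m - 1 ∧ l = n - 4) ∨ k = l) with ⟨hk, hl⟩ | ⟨rfl, rfl⟩ | ⟨rfl, rfl⟩ | rfl
    · rw [hone k hk, hone l hl]
    · rw [hend, hpred]
    · rw [hend, hpred]
    · rfl
  exact hrev 0 j hj

lemma insertAt_zero_succ_of_le (hper : hasPer s m) (hrun : occOnes s (n - 4) 0) (hnm : n ≤ m)
    (hp : p + 5 ≤ m + n) : insertAt s m 0 (p + 1) = s p := by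
  rcases lt_or_ge p m with hpm | hpm
  · rw [insertAt_of_lt_of_le (by omega) (by omega : p + 1 ≤ m), Nat.add_sub_cancel]
  · have hone : s p = true := by
      rw [show p = p - m + m by omega, hper]
      simpa using hrun (p - m) (by omega)
    rw [hone, show p + 1 = p - m + (m + 1) by omega, insertAt_periodic]
    rcases Nat.eq_zero_or_pos (p - m) with h0 | h0
    · rw [h0]
      exact insertAt_self (Nat.zero_le m)
    · rw [insertAt_of_lt_of_le h0 (by omega)]
      simpa using hrun (p - m - 1) (by omega)

lemma insertAt_zero_add_two (hper : hasPer s m) (h1 : m ≤ p) (h2 : p < 2 * m) :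
    insertAt s m 0 (p + 2) = s p := by
  rw [show p + 2 = p - m + 1 + (m + 1) by omega, insertAt_periodic,
    insertAt_of_lt_of_le (by omega) (by omega), Nat.add_sub_cancel, ← hper (p - m),
    Nat.sub_add_cancel h1]

lemma occOnes_insertAt_zero {L : ℕ} (hrun : occOnes s L 0) (hL : L ≤ m) :
    occOnes (insertAt s m 0) (L + 1) (m + 1) := by
  intro k hk
  rw [show m + 1 + k = k + (m + 1) by omega, insertAt_periodic]
  rcases Nat.eq_zero_or_pos k with rfl | hk0
  · exact insertAt_self (Nat.zero_le m)
  · rw [insertAt_of_lt_of_le hk0 (by omega)]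
    simpa using hrun (k - 1) (by omega)

lemma insertAt_zero_run_flanked (hrun : occOnes s (n - 4) 0) (hend : s (n - 4) = false)
    (hpred : s (m - 1) = false) (hn : 4 ≤ n) (hnm : n ≤ m) :
    insertAt s m 0 m = false ∧ occOnes (insertAt s m 0) (n - 3) (m + 1) ∧
      insertAt s m 0 (m + n - 2) = false := by
  refine ⟨?_, ?_, ?_⟩
  · rwa [insertAt_of_lt_of_le (by omega) le_rfl]
  · rw [show n - 3 = n - 4 + 1 by omega]
    exact occOnes_insertAt_zero hrun (by omega)
  · rwa [show m + n - 2 = n - 3 + (m + 1) by omega, insertAt_periodic,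
      insertAt_of_lt_of_le (by omega) (by omega), show n - 3 - 1 = n - 4 by omega]

end IsolatedRun

section InsertAtZero

variable {s : ℕ → Bool} {n m : ℕ}

lemma tup_insertAt_zero_succ (hper : hasPer s m) (hrun : occOnes s (n - 4) 0) (hnm : n ≤ m)
    {q : ℕ} (hq : q + 4 ≤ m) : tup (insertAt s m 0) n (q + 1) = tup s n q := by
  funext k
  simp only [tup]
  rw [Nat.add_right_comm, insertAt_zero_succ_of_le hper hrun hnm (by omega)]

lemma tup_ne_tup_insertAt_zero (hrun : occOnes s (n - 4) 0) (hno : ∀ i, ¬ occOnes s (n - 3) i)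
    (hn : 4 ≤ n) (hnm : n ≤ m) (q : ℕ) {y : ℕ} (hy1 : m - 2 ≤ y) (hy2 : y ≤ m + 1) :
    tup s n q ≠ tup (insertAt s m 0) n y ∧ tup s n q ≠ tupRev (tup (insertAt s m 0) n y) := by
  have hones : occOnes (insertAt s m 0) (n - 3) (y + (m + 1 - y)) := by
    rw [show y + (m + 1 - y) = m + 1 by omega, show n - 3 = n - 4 + 1 by omega]
    exact occOnes_insertAt_zero hrun (by omega)
  exact ⟨fun h => hno _ (occOnes_of_tup_eq h (by omega) hones),
    fun h => hno _ (occOnes_of_tup_eq_tupRev h (by omega) hones)⟩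

lemma tup_insertAt_zero_ne_of_lt (hrun : occOnes s (n - 4) 0) (hend : s (n - 4) = false)
    (hpred : s (m - 1) = false) (hn : 6 ≤ n) (hnm : n ≤ m) {x y : ℕ} (hx : m - 2 ≤ x)
    (hxy : x < y) (hy : y ≤ m + 1) : tup (insertAt s m 0) n x ≠ tup (insertAt s m 0) n y := by
  obtain ⟨hzero, hones, -⟩ := insertAt_zero_run_flanked hrun hend hpred (by omega) hnm
  intro h
  have hk := congrFun h ⟨m - x, by omega⟩
  simp only [tup] at hk
  rw [show x + (m - x) = m by omega, hzero, show y + (m - x) = m + 1 + (y - x - 1) by omega,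
    hones _ (by omega)] at hk
  exact Bool.false_ne_true hk

lemma apply_eq_of_tup_insertAt_zero_eq_tupRev (hper : hasPer s m) (hrun : occOnes s (n - 4) 0)
    (hnm : n ≤ m) {q q' k : ℕ}
    (h : tup (insertAt s m 0) n (q + 1) = tupRev (tup (insertAt s m 0) n (q' + 2)))
    (hk : k < n) (hq : q + k + 5 ≤ m + n) (hq'1 : m ≤ q' + (n - (k + 1)))
    (hq'2 : q' + (n - (k + 1)) < 2 * m) : s (q + k) = s (q' + (n - (k + 1))) := by
  have hk' := congrFun h ⟨k, hk⟩
  simp only [tup, tupRev, Fin.val_rev] at hk'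
  rwa [Nat.add_right_comm, insertAt_zero_succ_of_le hper hrun hnm hq,
    show q' + 2 + (n - (k + 1)) = q' + (n - (k + 1)) + 2 by omega,
    insertAt_zero_add_two hper hq'1 hq'2] at hk'

lemma tup_sub_three_eq_tupRev_of_insertAt_zero (hper : hasPer s m)
    (hrun : occOnes s (n - 4) 0) (hend : s (n - 4) = false) (hpred : s (m - 1) = false)
    (hn : 6 ≤ n) (hnm : n ≤ m)
    (h : tup (insertAt s m 0) n (m - 3 + 1) = tupRev (tup (insertAt s m 0) n (m - 1 + 2))) :
    tup s n (m - 3) = tupRev (tup s n (m - 1)) := by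
  funext k
  simp only [tup, tupRev, Fin.val_rev]
  rcases (by omega : (k : ℕ) + 2 ≤ n ∨ (k : ℕ) = n - 1) with hk | hk
  · exact apply_eq_of_tup_insertAt_zero_eq_tupRev hper hrun hnm h k.isLt
      (by omega) (by omega) (by omega)
  · rw [hk, show m - 3 + (n - 1) = n - 4 + m by omega, hper, hend,
      show n - (n - 1 + 1) = 0 by omega, Nat.add_zero, hpred]

lemma tup_sub_two_eq_tupRev_self_of_insertAt_zero (hper : hasPer s m)
    (hrun : occOnes s (n - 4) 0) (hn : 6 ≤ n) (hnm : n ≤ m)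
    (h : tup (insertAt s m 0) n (m - 2 + 1) = tupRev (tup (insertAt s m 0) n (m - 2 + 2))) :
    tup s n (m - 2) = tupRev (tup s n (m - 2)) := by
  have hpal : ∀ k, k + 3 ≤ n → s (m - 2 + k) = s (m - 2 + (n - (k + 1))) := fun k hk =>
    apply_eq_of_tup_insertAt_zero_eq_tupRev hper hrun hnm h (by omega)
      (by omega) (by omega) (by omega)
  funext k
  simp only [tup, tupRev, Fin.val_rev]
  rcases le_or_gt ((k : ℕ) + 3) n with hk | hk
  · exact hpal k hk
  · have hk' := hpal (n - (k + 1)) (by omega)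
    rw [show n - (n - (k + 1) + 1) = (k : ℕ) by omega] at hk'
    exact hk'.symm

lemma tup_insertAt_zero_ne_tupRev (hper : hasPer s m)
    (hrev : ∀ i j, tup s n i ≠ tupRev (tup s n j)) (hrun : occOnes s (n - 4) 0)
    (hend : s (n - 4) = false) (hpred : s (m - 1) = false) (hn : 6 ≤ n) (hnm : n ≤ m)
    {x y : ℕ} (hx1 : m - 2 ≤ x) (hx2 : x ≤ m + 1) (hy1 : m - 2 ≤ y) (hy2 : y ≤ m + 1) :
    tup (insertAt s m 0) n x ≠ tupRev (tup (insertAt s m 0) n y) := by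
  wlog hxy : x ≤ y generalizing x y
  · exact fun h => this hy1 hy2 hx1 hx2 (by omega) (eq_tupRev_comm.mp h)
  obtain ⟨hzero, hones, hzero'⟩ := insertAt_zero_run_flanked hrun hend hpred (by omega) hnm
  intro h
  have hk : ∀ k, k < n → insertAt s m 0 (x + k) = insertAt s m 0 (y + (n - (k + 1))) :=
    fun k hk => by simpa [tup, tupRev] using congrFun h ⟨k, hk⟩
  -- Unless `x + y = 2 * m - 1`, a zero flanking the run in one window faces a one of the run in
  -- the other; in the two remaining cases the reversal descends to windows of `s`.
  rcases (by omega : x + y + 2 ≤ 2 * m ∨ 2 * m ≤ x + y ∨ (x = m - 3 + 1 ∧ y = m - 1 + 2) ∨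
      (x = m - 2 + 1 ∧ y = m - 2 + 2)) with hsum | hsum | ⟨rfl, rfl⟩ | ⟨rfl, rfl⟩
  · have hk' := hk (m - x) (by omega)
    rw [show x + (m - x) = m by omega, hzero,
      show y + (n - (m - x + 1)) = m + 1 + (x + y + n - 2 * m - 2) by omega,
      hones _ (by omega)] at hk'
    exact Bool.false_ne_true hk'
  · have hk' := hk (m + n - 2 - x) (by omega)
    rw [show x + (m + n - 2 - x) = m + n - 2 by omega, hzero',
      show y + (n - (m + n - 2 - x + 1)) = m + 1 + (x + y - 2 * m) by omega,
      hones _ (by omega)] at hk'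
    exact Bool.false_ne_true hk'
  · exact hrev _ _ (tup_sub_three_eq_tupRev_of_insertAt_zero hper hrun hend hpred hn hnm h)
  · exact hrev _ _ (tup_sub_two_eq_tupRev_self_of_insertAt_zero hper hrun hn hnm h)

theorem isOrientable_insertAt_zero (h : isOrientable s n m) (hn : 6 ≤ n)
    (hrun : occOnes s (n - 4) 0) (hno : ∀ i, ¬ occOnes s (n - 3) i) :
    isOrientable (insertAt s m 0) n (m + 1) := by
  have hnm := le_period_of_run h (by omega) hrun hno
  obtain ⟨⟨⟨hm, hper, -⟩, hinj⟩, hrev⟩ := h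
  have hend := run_end_eq_false hrun hno (by omega)
  have hpred := run_pred_eq_false hper hm hrun hno
  have hsep := tup_ne_tup_insertAt_zero hrun hno (by omega) hnm
  have hwin : ∀ x, 1 ≤ x → x ≤ m - 3 → tup (insertAt s m 0) n x = tup s n (x - 1) :=
    fun x hx1 hx2 => by
      rw [← tup_insertAt_zero_succ hper hrun hnm (q := x - 1) (by omega), Nat.sub_add_cancel hx1]
  refine isOrientable_of_Icc (by omega) (insertAt_periodic s m 0)
    (fun x y hx1 hx2 hy1 hy2 hxy => ?_) (fun x y hx1 hx2 hy1 hy2 hxy => ?_)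
  · rcases le_or_gt x (m - 3) with hx | hx <;> rcases le_or_gt y (m - 3) with hy | hy
    · rw [hwin x hx1 hx, hwin y hy1 hy] at hxy
      have := (hinj _ _ hxy).eq_of_lt_of_lt (by omega) (by omega)
      omega
    · rw [hwin x hx1 hx] at hxy
      exact absurd hxy (hsep (x - 1) (by omega) hy2).1
    · rw [hwin y hy1 hy] at hxy
      exact absurd hxy.symm (hsep (y - 1) (by omega) hx2).1
    · by_contra hne
      rcases Nat.lt_or_gt_of_ne hne with hlt | hlt
      · exact tup_insertAt_zero_ne_of_lt hrun hend hpred hn hnm (by omega) hlt hy2 hxy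
      · exact tup_insertAt_zero_ne_of_lt hrun hend hpred hn hnm (by omega) hlt hx2 hxy.symm
  · rcases le_or_gt x (m - 3) with hx | hx <;> rcases le_or_gt y (m - 3) with hy | hy
    · rw [hwin x hx1 hx, hwin y hy1 hy] at hxy
      exact hrev _ _ hxy
    · rw [hwin x hx1 hx] at hxy
      exact (hsep (x - 1) (by omega) hy2).2 hxy
    · rw [hwin y hy1 hy] at hxy
      exact (hsep (y - 1) (by omega) hx2).2 (eq_tupRev_comm.mp hxy)
    · exact tup_insertAt_zero_ne_tupRev hper hrev hrun hend hpred hn hnm (by omega) hx2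
        (by omega) hy2 hxy

end InsertAtZero

section UniqueRun

variable {s : ℕ → Bool} {n m r : ℕ}

lemma six_le_of_not_odd_wt (h : isOrientable s n m) (hr : r < m)
    (hocc : occOnes s (n - 4) r) (huniq : ∀ i, i < m → occOnes s (n - 4) i → i = r)
    (heven : ¬ Odd (wt s m)) : 6 ≤ n := by
  have hm : 0 < m := h.1.1.1
  have hper : hasPer s m := h.1.1.2.1
  have h5 : 5 ≤ n := by
    by_contra hn
    exact not_modEq_succ h.two_le 0
      (occOnes_modEq_of_unique hper hm huniq (fun k hk => by omega) (fun k hk => by omega))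
  by_contra hn
  obtain rfl : n = 5 := by omega
  refine heven ?_
  rw [wt_eq_one hr (by simpa using hocc 0 one_pos) fun i hi hsi =>
    huniq i hi fun k hk => by rwa [show k = 0 by omega, Nat.add_zero]]
  exact odd_one

theorem isOrientable_insertAt (h : isOrientable s n m) (hr : r < m) (hn : 6 ≤ n)
    (hocc : occOnes s (n - 4) r) (huniq : ∀ i, i < m → occOnes s (n - 4) i → i = r) :
    isOrientable (insertAt s m r) n (m + 1) := by
  have hm : 0 < m := h.1.1.1
  have hper : hasPer s m := h.1.1.2.1
  have hrun : occOnes (fun x => s (r + x)) (n - 4) 0 := occOnes_shift.mpr hocc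
  have hno : ∀ i, ¬ occOnes (fun x => s (r + x)) (n - 3) i := fun i hi => by
    rw [occOnes_shift, show n - 3 = n - 4 + 1 by omega] at hi
    exact not_occOnes_succ h.two_le
      (fun _ _ => occOnes_modEq_of_unique hper hm huniq) _ hi
  rw [insertAt_eq_shift hper hr.le]
  exact (isOrientable_insertAt_zero (h.shift r) hn hrun hno).shift (m + 1 - r)

end UniqueRun

/-- Lemma 2: if `S` is an orientable sequence of order `n` and period `m` in
which the tuple `1^(n-4)` occurs exactly once in a period (at position `r`),
then `E(S)` — which is `S` if `w(S)` is odd, and otherwise is obtained by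
replacing the occurrence of `1^(n-4)` by `1^(n-3)` — is an orientable sequence
of order `n` and odd weight, of period `m` if `w(S)` is odd and `m+1` if `w(S)`
is even. -/
theorem extension_orientable (n m r : ℕ) (s : ℕ → Bool)
    (h : isOrientable s n m) (hr : r < m)
    (hocc : occOnes s (n - 4) r)
    (huniq : ∀ i, i < m → occOnes s (n - 4) i → i = r) :
    isOrientable (if Odd (wt s m) then s else insertAt s m r) n
        (if Odd (wt s m) then m else m + 1) ∧
      Odd (wt (if Odd (wt s m) then s else insertAt s m r)
        (if Odd (wt s m) then m else m + 1)) := by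
  by_cases hodd : Odd (wt s m)
  · rw [if_pos hodd, if_pos hodd]
    exact ⟨h, hodd⟩
  · rw [if_neg hodd, if_neg hodd]
    refine ⟨isOrientable_insertAt h hr (six_le_of_not_odd_wt h hr hocc huniq hodd) hocc huniq, ?_⟩
    rw [wt_insertAt hr.le]
    exact (Nat.not_odd_iff_even.mp hodd).add_one
end
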